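/- arXiv:2207.06073 — 2 statements merged into one kernel-verified Lean document; each statement's English description precedes it below -/
import Mathlib

section
/- There exists a universal constant C > 0 with the following property. Let Q₁ = [−1/2,1/2]³, let Q₂, Q₃ ⊂ ℝ³ be cubes of side lengths in [1/4,4] with Q₂, Q₃ ⊂ B_{10}(0), and let v ∈ L¹(B_{10}(0)). Then ∫_{Q₁} ∫_{Q₂} ∫_{Q₃} ∫_{Sim(x₁,x₂,x₃)} |v(z)| dH²(z) dx₃ dx₂ dx₁ ≤ C ∫_{B_{10}(0)} |v(z)| dz. -/
/-!
Every point of a triangle has a barycentric weight at least `1/3`, so the triangle is covered by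
three images of one parameter region on which the weight of a designated vertex is `≥ 1/3`. Each
image is Lipschitz in the parameters with constant `2 · diam`, so its `H²`-integral is controlled
by a Lebesgue integral over the parameters. Integrating first over the designated vertex `x`, the
integrand is `|v|(a + r • x)` with `r ≥ 1/3`, whose integral is at most `3³ ∫ |v|`; the other two
vertices range over sets of bounded volume. All vertex domains are enlarged to `B₁₀(0)`, so the
product measure is invariant under cyclic rotation of the vertices and the three pieces give the
same bound.

Since `H²` on triangles sees Lebesgue-null sets, `|v|` is replaced by a Borel function that
dominates it everywhere and agrees with it almost everywhere.
-/

open MeasureTheory Metric ENNReal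

noncomputable section

local notation "E3" => EuclideanSpace ℝ (Fin 3)

/-- The closed axis-parallel cube with center `c` and side length `l`. -/
def cube (c : E3) (l : ℝ) : Set E3 :=
  {x | ∀ i : Fin 3, |x i - c i| ≤ l / 2}

open NNReal Set Module

def rotateTriple {α : Type*} (p : α × α × α) : α × α × α := (p.2.1, p.2.2, p.1)

section TripleProduct

variable {α : Type*} [MeasurableSpace α]

@[fun_prop]
lemma measurable_rotateTriple : Measurable (rotateTriple : α × α × α → α × α × α) := by
  unfold rotateTriple
  fun_prop

lemma lintegral_comp_rotateTriple (ν : Measure α) [SFinite ν] (f : α × α × α → ℝ≥0∞) :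
    ∫⁻ p, f (rotateTriple p) ∂ν.prod (ν.prod ν) = ∫⁻ p, f p ∂ν.prod (ν.prod ν) :=
  ((measurePreserving_prodAssoc ν ν ν).comp Measure.measurePreserving_swap).lintegral_comp_emb
    (MeasurableEquiv.prodComm.trans MeasurableEquiv.prodAssoc).measurableEmbedding f

lemma lintegral_lintegral_lintegral_eq_lintegral_prod {β γ : Type*} [MeasurableSpace β]
    [MeasurableSpace γ] (μ : Measure α) (ν : Measure β) (ρ : Measure γ) [SFinite ν] [SFinite ρ]
    {f : α × β × γ → ℝ≥0∞} (hf : Measurable f) :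
    ∫⁻ x, ∫⁻ y, ∫⁻ z, f (x, y, z) ∂ρ ∂ν ∂μ = ∫⁻ p, f p ∂μ.prod (ν.prod ρ) := by
  rw [lintegral_prod _ hf.aemeasurable]
  exact lintegral_congr fun x =>
    (lintegral_prod _ (hf.comp measurable_prodMk_left).aemeasurable).symm

end TripleProduct

section Parametrization

def paramTriangle : Set (Fin 2 → ℝ) := {s | 0 ≤ s 0 ∧ 0 ≤ s 1 ∧ s 0 + s 1 ≤ 1}

def paramCorner : Set (Fin 2 → ℝ) := paramTriangle ∩ {s | 1 / 3 ≤ s 1}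

lemma measurableSet_paramCorner : MeasurableSet paramCorner := by
  unfold paramCorner paramTriangle
  measurability

lemma volume_paramCorner_le_one : volume paramCorner ≤ 1 := by
  have hsub : paramCorner ⊆ univ.pi fun _ : Fin 2 => Icc (0 : ℝ) 1 := by
    rintro s ⟨⟨h0, h1, hsum⟩, -⟩ i -
    fin_cases i <;> constructor <;> simp <;> linarith
  calc volume paramCorner ≤ volume (univ.pi fun _ : Fin 2 => Icc (0 : ℝ) 1) := measure_mono hsub
    _ = 1 := by simp [Real.volume_Icc_pi]

variable {E : Type*} [NormedAddCommGroup E] [NormedSpace ℝ E]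

def triangleMap (p : E × E × E) (s : Fin 2 → ℝ) : E :=
  (1 - s 0 - s 1) • p.1 + s 0 • p.2.1 + s 1 • p.2.2

def cornerIntegral (g : E → ℝ≥0∞) (p : E × E × E) : ℝ≥0∞ :=
  ∫⁻ s in paramCorner, g (triangleMap p s)

lemma continuous_triangleMap :
    Continuous fun q : (E × E × E) × (Fin 2 → ℝ) => triangleMap q.1 q.2 := by
  unfold triangleMap
  fun_prop

lemma lipschitzWith_triangleMap {B : Set E} {D : ℝ≥0} (hB : ∀ x ∈ B, ∀ y ∈ B, dist x y ≤ D)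
    {p : E × E × E} (h₁ : p.1 ∈ B) (h₂ : p.2.1 ∈ B) (h₃ : p.2.2 ∈ B) :
    LipschitzWith (2 * D) (triangleMap p) := by
  refine LipschitzWith.of_dist_le_mul fun s t => ?_
  have hdiff : triangleMap p s - triangleMap p t
      = (s 0 - t 0) • (p.2.1 - p.1) + (s 1 - t 1) • (p.2.2 - p.1) := by
    simp only [triangleMap]
    module
  have hcoord (i : Fin 2) : |s i - t i| ≤ dist s t := by
    rw [← Real.dist_eq]
    exact dist_le_pi_dist s t i
  have hside₂ : ‖p.2.1 - p.1‖ ≤ D := by rw [← dist_eq_norm]; exact hB _ h₂ _ h₁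
  have hside₃ : ‖p.2.2 - p.1‖ ≤ D := by rw [← dist_eq_norm]; exact hB _ h₃ _ h₁
  rw [dist_eq_norm, hdiff]
  calc ‖(s 0 - t 0) • (p.2.1 - p.1) + (s 1 - t 1) • (p.2.2 - p.1)‖
      ≤ |s 0 - t 0| * ‖p.2.1 - p.1‖ + |s 1 - t 1| * ‖p.2.2 - p.1‖ := by
        refine (norm_add_le _ _).trans_eq ?_
        rw [norm_smul, norm_smul, Real.norm_eq_abs, Real.norm_eq_abs]
    _ ≤ dist s t * D + dist s t * D := by gcongr <;> exact hcoord _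
    _ = ↑(2 * D) * dist s t := by push_cast; ring

lemma convex_triangleMap_image (p : E × E × E) : Convex ℝ (triangleMap p '' paramTriangle) := by
  rintro _ ⟨s, ⟨hs₀, hs₁, hs⟩, rfl⟩ _ ⟨t, ⟨ht₀, ht₁, ht⟩, rfl⟩ a b ha hb hab
  refine ⟨a • s + b • t, ⟨by simp only [Pi.add_apply, Pi.smul_apply, smul_eq_mul]; positivity,
    by simp only [Pi.add_apply, Pi.smul_apply, smul_eq_mul]; positivity, ?_⟩, ?_⟩
  · simp only [Pi.add_apply, Pi.smul_apply, smul_eq_mul]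
    nlinarith
  · simp only [triangleMap, Pi.add_apply, Pi.smul_apply, smul_eq_mul]
    match_scalars
    · linear_combination -hab
    · ring
    · ring

lemma convexHull_subset_triangleMap_image (p : E × E × E) :
    convexHull ℝ {p.1, p.2.1, p.2.2} ⊆ triangleMap p '' paramTriangle := by
  refine convexHull_min ?_ (convex_triangleMap_image p)
  rintro _ (rfl | rfl | rfl)
  · exact ⟨![0, 0], by norm_num [paramTriangle], by simp [triangleMap]⟩
  · exact ⟨![1, 0], by norm_num [paramTriangle], by simp [triangleMap]⟩
  · exact ⟨![0, 1], by norm_num [paramTriangle], by simp [triangleMap]⟩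

/-- Some barycentric weight is at least `1/3`; rotating the vertices makes it the last one. -/
lemma triangleMap_image_subset_union (p : E × E × E) :
    triangleMap p '' paramTriangle ⊆ triangleMap (rotateTriple p) '' paramCorner ∪
      triangleMap (rotateTriple (rotateTriple p)) '' paramCorner ∪
      triangleMap p '' paramCorner := by
  rintro _ ⟨s, ⟨hs₀, hs₁, hsum⟩, rfl⟩
  by_cases h₃ : 1 / 3 ≤ s 1
  · exact Or.inr ⟨s, ⟨⟨hs₀, hs₁, hsum⟩, h₃⟩, rfl⟩
  by_cases h₂ : 1 / 3 ≤ s 0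
  · refine Or.inl (Or.inr ⟨![1 - s 0 - s 1, s 0], ⟨⟨?_, ?_, ?_⟩, ?_⟩, ?_⟩)
    all_goals simp [triangleMap, rotateTriple]
    all_goals first | linarith | module
  · refine Or.inl (Or.inl ⟨![s 1, 1 - s 0 - s 1], ⟨⟨?_, ?_, ?_⟩, ?_⟩, ?_⟩)
    all_goals simp [triangleMap, rotateTriple]
    all_goals first | linarith | module

end Parametrization

theorem lintegral_image_le_of_lipschitzWith {ι X : Type*} [Fintype ι] [EMetricSpace X]
    [MeasurableSpace X] [BorelSpace X] {K : ℝ≥0} {F : (ι → ℝ) → X} (hF : LipschitzWith K F)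
    {g : X → ℝ≥0∞} (hg : Measurable g) (S : Set (ι → ℝ)) :
    ∫⁻ z in F '' S, g z ∂μH[Fintype.card ι] ≤ K ^ Fintype.card ι * ∫⁻ s in S, g (F s) := by
  have hFm : Measurable F := hF.continuous.measurable
  have hle : (μH[Fintype.card ι] : Measure X).restrict (F '' S)
      ≤ ((K : ℝ≥0∞) ^ Fintype.card ι) • (volume.restrict S).map F := by
    refine Measure.le_iff.2 fun A hA => ?_
    rw [Measure.restrict_apply hA, Measure.smul_apply, Measure.map_apply hFm hA,
      Measure.restrict_apply (hFm hA), smul_eq_mul, ← hausdorffMeasure_pi_real]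
    calc μH[Fintype.card ι] (A ∩ F '' S) ≤ μH[Fintype.card ι] (F '' (F ⁻¹' A ∩ S)) := by
          refine measure_mono ?_
          rintro _ ⟨hzA, s, hs, rfl⟩
          exact ⟨s, ⟨hzA, hs⟩, rfl⟩
      _ ≤ _ := by
          simpa only [ENNReal.rpow_natCast] using
            hF.hausdorffMeasure_image_le (Nat.cast_nonneg _) _
  calc ∫⁻ z in F '' S, g z ∂μH[Fintype.card ι]
      ≤ ∫⁻ z, g z ∂(((K : ℝ≥0∞) ^ Fintype.card ι) • (volume.restrict S).map F) :=
        lintegral_mono' hle le_rfl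
    _ = _ := by rw [lintegral_smul_measure, lintegral_map hg hFm, smul_eq_mul]

section Hausdorff

variable {E : Type*} [NormedAddCommGroup E] [NormedSpace ℝ E] [MeasurableSpace E] [BorelSpace E]
  {g : E → ℝ≥0∞}

lemma lintegral_convexHull_le_cornerIntegral (hg : Measurable g) {B : Set E} {D : ℝ≥0}
    (hB : ∀ x ∈ B, ∀ y ∈ B, dist x y ≤ D) {p : E × E × E}
    (h₁ : p.1 ∈ B) (h₂ : p.2.1 ∈ B) (h₃ : p.2.2 ∈ B) :
    ∫⁻ z in convexHull ℝ {p.1, p.2.1, p.2.2}, g z ∂μH[2] ≤ ((2 * D : ℝ≥0) : ℝ≥0∞) ^ 2 *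
      (cornerIntegral g (rotateTriple p) + cornerIntegral g (rotateTriple (rotateTriple p)) +
        cornerIntegral g p) := by
  have himage {q : E × E × E} (hq₁ : q.1 ∈ B) (hq₂ : q.2.1 ∈ B) (hq₃ : q.2.2 ∈ B) :
      ∫⁻ z in triangleMap q '' paramCorner, g z ∂μH[2]
        ≤ ((2 * D : ℝ≥0) : ℝ≥0∞) ^ 2 * cornerIntegral g q := by
    simpa [cornerIntegral] using lintegral_image_le_of_lipschitzWith
      (lipschitzWith_triangleMap hB hq₁ hq₂ hq₃) hg paramCorner
  calc ∫⁻ z in convexHull ℝ {p.1, p.2.1, p.2.2}, g z ∂μH[2]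
      ≤ ∫⁻ z in triangleMap (rotateTriple p) '' paramCorner ∪
          triangleMap (rotateTriple (rotateTriple p)) '' paramCorner ∪
          triangleMap p '' paramCorner, g z ∂μH[2] :=
        lintegral_mono_set ((convexHull_subset_triangleMap_image p).trans
          (triangleMap_image_subset_union p))
    _ ≤ ∫⁻ z in triangleMap (rotateTriple p) '' paramCorner, g z ∂μH[2] +
          ∫⁻ z in triangleMap (rotateTriple (rotateTriple p)) '' paramCorner, g z ∂μH[2] +
          ∫⁻ z in triangleMap p '' paramCorner, g z ∂μH[2] :=
        (lintegral_union_le _ _ _).trans (add_le_add_left (lintegral_union_le _ _ _) _)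
    _ ≤ _ := by
        rw [mul_add, mul_add]
        gcongr
        · exact himage h₂ h₃ h₁
        · exact himage h₃ h₁ h₂
        · exact himage h₁ h₂ h₃

end Hausdorff

section AddHaar

variable {E : Type*} [NormedAddCommGroup E] [NormedSpace ℝ E] [MeasurableSpace E] [BorelSpace E]
  [FiniteDimensional ℝ E] (μ : Measure E) [μ.IsAddHaarMeasure] {g : E → ℝ≥0∞}

lemma lintegral_comp_add_smul (hg : Measurable g) (a : E) {r : ℝ} (hr : 0 < r) :
    ∫⁻ x, g (a + r • x) ∂μ = ENNReal.ofReal (r ^ finrank ℝ E)⁻¹ * ∫⁻ z, g z ∂μ := by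
  calc ∫⁻ x, g (a + r • x) ∂μ = ∫⁻ y, g (a + y) ∂μ.map (r • ·) :=
        (lintegral_map (hg.comp (measurable_const_add a)) (measurable_const_smul r)).symm
    _ = _ := by
        rw [Measure.map_addHaar_smul μ hr.ne', lintegral_smul_measure,
          lintegral_add_left_eq_self g a, abs_of_pos (by positivity), smul_eq_mul]

lemma measurable_cornerIntegral (hg : Measurable g) : Measurable (cornerIntegral g) :=
  (hg.comp continuous_triangleMap.measurable).lintegral_prod_right'

/-- On `paramCorner` the weight `r` of the last vertex is at least `1/3`, so the substitution
`x₃ ↦ a + r • x₃` has Jacobian at most `3 ^ finrank ℝ E`. -/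
lemma lintegral_cornerIntegral_le (hg : Measurable g) (x₁ x₂ : E) :
    ∫⁻ x₃, cornerIntegral g (x₁, x₂, x₃) ∂μ ≤ 3 ^ finrank ℝ E * ∫⁻ z, g z ∂μ := by
  have hjoint : Measurable fun q : E × (Fin 2 → ℝ) => g (triangleMap (x₁, x₂, q.1) q.2) :=
    hg.comp (continuous_triangleMap.comp
      (f := fun q : E × (Fin 2 → ℝ) => ((x₁, x₂, q.1), q.2)) (by fun_prop)).measurable
  have hslice (s : Fin 2 → ℝ) (hs : s ∈ paramCorner) :
      ∫⁻ x₃, g (triangleMap (x₁, x₂, x₃) s) ∂μ ≤ 3 ^ finrank ℝ E * ∫⁻ z, g z ∂μ := by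
    have hthird : 1 / 3 ≤ s 1 := hs.2
    have hr : 0 < s 1 := by linarith
    simp only [triangleMap]
    rw [lintegral_comp_add_smul μ hg _ hr]
    gcongr
    rw [← inv_pow, ENNReal.ofReal_pow (by positivity)]
    gcongr
    rw [ENNReal.ofReal_le_iff_le_toReal (by simp)]
    simpa using inv_le_of_inv_le₀ (by norm_num) (by simpa using hthird)
  calc ∫⁻ x₃, cornerIntegral g (x₁, x₂, x₃) ∂μ
      = ∫⁻ s in paramCorner, ∫⁻ x₃, g (triangleMap (x₁, x₂, x₃) s) ∂μ :=
        lintegral_lintegral_swap hjoint.aemeasurable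
    _ ≤ ∫⁻ _ in paramCorner, 3 ^ finrank ℝ E * ∫⁻ z, g z ∂μ :=
        setLIntegral_mono' measurableSet_paramCorner hslice
    _ ≤ 3 ^ finrank ℝ E * ∫⁻ z, g z ∂μ := by
        rw [setLIntegral_const]
        exact mul_le_of_le_one_right' volume_paramCorner_le_one

theorem lintegral_lintegral_lintegral_convexHull_le {B : Set E} {D : ℝ≥0} (hg : Measurable g)
    (hBm : MeasurableSet B) (hB : ∀ x ∈ B, ∀ y ∈ B, dist x y ≤ D) :
    ∫⁻ x₁ in B, ∫⁻ x₂ in B, ∫⁻ x₃ in B, ∫⁻ z in convexHull ℝ {x₁, x₂, x₃}, g z ∂μH[2] ∂μ ∂μ ∂μ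
      ≤ 3 * ((2 * D : ℝ≥0) : ℝ≥0∞) ^ 2 * 3 ^ finrank ℝ E * μ B ^ 2 * ∫⁻ z, g z ∂μ := by
  set ν := μ.restrict B
  set K : ℝ≥0∞ := ((2 * D : ℝ≥0) : ℝ≥0∞) ^ 2
  set T := cornerIntegral g
  have hT : Measurable T := measurable_cornerIntegral hg
  have hcorner : ∫⁻ p, T p ∂ν.prod (ν.prod ν) ≤ μ B ^ 2 * (3 ^ finrank ℝ E * ∫⁻ z, g z ∂μ) :=
    calc ∫⁻ p, T p ∂ν.prod (ν.prod ν) = ∫⁻ x₁, ∫⁻ x₂, ∫⁻ x₃, T (x₁, x₂, x₃) ∂ν ∂ν ∂ν :=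
          (lintegral_lintegral_lintegral_eq_lintegral_prod ν ν ν hT).symm
      _ ≤ ∫⁻ _, ∫⁻ _, 3 ^ finrank ℝ E * ∫⁻ z, g z ∂μ ∂ν ∂ν := by
          gcongr with x₁ x₂
          exact (lintegral_mono' Measure.restrict_le_self le_rfl).trans
            (lintegral_cornerIntegral_le μ hg x₁ x₂)
      _ = _ := by rw [lintegral_const, lintegral_const, Measure.restrict_apply_univ]; ring
  calc ∫⁻ x₁ in B, ∫⁻ x₂ in B, ∫⁻ x₃ in B, ∫⁻ z in convexHull ℝ {x₁, x₂, x₃}, g z ∂μH[2] ∂μ ∂μ ∂μ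
      ≤ ∫⁻ x₁, ∫⁻ x₂, ∫⁻ x₃, K * (T (rotateTriple (x₁, x₂, x₃)) +
          T (rotateTriple (rotateTriple (x₁, x₂, x₃))) + T (x₁, x₂, x₃)) ∂ν ∂ν ∂ν := by
        refine setLIntegral_mono' hBm fun x₁ h₁ => setLIntegral_mono' hBm fun x₂ h₂ =>
          setLIntegral_mono' hBm fun x₃ h₃ => ?_
        exact lintegral_convexHull_le_cornerIntegral hg hB (p := (x₁, x₂, x₃)) h₁ h₂ h₃
    _ = ∫⁻ p, K * (T (rotateTriple p) + T (rotateTriple (rotateTriple p)) + T p)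
          ∂ν.prod (ν.prod ν) :=
        lintegral_lintegral_lintegral_eq_lintegral_prod (f := fun p =>
          K * (T (rotateTriple p) + T (rotateTriple (rotateTriple p)) + T p)) ν ν ν (by fun_prop)
    _ = K * (3 * ∫⁻ p, T p ∂ν.prod (ν.prod ν)) := by
        rw [lintegral_const_mul _ (by fun_prop),
          lintegral_add_left (f := fun p => T (rotateTriple p) + T (rotateTriple (rotateTriple p)))
            (by fun_prop),
          lintegral_add_left (f := fun p => T (rotateTriple p)) (by fun_prop),
          lintegral_comp_rotateTriple ν (fun p => T (rotateTriple p)),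
          lintegral_comp_rotateTriple ν T]
        ring
    _ ≤ _ := by
        grw [hcorner]
        exact le_of_eq (by ring)

end AddHaar

theorem AEMeasurable.exists_measurable_ge_ae_eq {α : Type*} [MeasurableSpace α] {μ : Measure α}
    {f : α → ℝ≥0∞} (hf : AEMeasurable f μ) : ∃ g, Measurable g ∧ f ≤ g ∧ f =ᵐ[μ] g := by
  set N := toMeasurable μ {x | f x ≠ hf.mk f x}
  have hN : μ N = 0 := by rw [measure_toMeasurable]; exact hf.ae_eq_mk
  classical
  refine ⟨N.piecewise ⊤ (hf.mk f),
    Measurable.piecewise (measurableSet_toMeasurable _ _) measurable_const hf.measurable_mk,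
    fun x => ?_, ?_⟩
  · by_cases hx : x ∈ N
    · simp [hx]
    · have hfx : f x = hf.mk f x := not_not.1 fun h => hx (subset_toMeasurable _ _ h)
      simp [hx, hfx]
  · filter_upwards [hf.ae_eq_mk, measure_eq_zero_iff_ae_notMem.1 hN] with x hfx hx
    simp [hx, hfx]

lemma cube_zero_one_subset_ball : cube 0 1 ⊆ ball (0 : E3) 10 := by
  intro x hx
  have hcoord (i : Fin 3) : x i ^ 2 ≤ 1 / 4 := by
    have hi : |x i| ≤ 1 / 2 := by simpa using hx i
    nlinarith [abs_le.1 hi]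
  rw [mem_ball_zero_iff, EuclideanSpace.norm_eq, Real.sqrt_lt' (by norm_num)]
  simp only [Real.norm_eq_abs, sq_abs, Fin.sum_univ_three]
  linarith [hcoord 0, hcoord 1, hcoord 2]

/-- **Lemma 3.8 (b).** Averaging the `H²`-integral of `|v|` over triangles with
vertices in the unit cube `Q₁ = [−1/2,1/2]³` and comparable cubes `Q₂, Q₃ ⊂ B₁₀(0)`
is controlled by `∫_{B₁₀(0)} |v|`. -/
theorem triangle_integral_bound :
    ∃ C : ℝ, 0 < C ∧
      ∀ (c₂ : E3) (l₂ : ℝ), 1 / 4 ≤ l₂ → l₂ ≤ 4 → cube c₂ l₂ ⊆ ball (0 : E3) 10 →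
      ∀ (c₃ : E3) (l₃ : ℝ), 1 / 4 ≤ l₃ → l₃ ≤ 4 → cube c₃ l₃ ⊆ ball (0 : E3) 10 →
      ∀ v : E3 → ℝ, IntegrableOn v (ball (0 : E3) 10) →
        (∀ x ∉ ball (0 : E3) 10, v x = 0) →
        ∫⁻ x₁ in cube 0 1, ∫⁻ x₂ in cube c₂ l₂, ∫⁻ x₃ in cube c₃ l₃,
            ∫⁻ z in convexHull ℝ {x₁, x₂, x₃}, ENNReal.ofReal |v z| ∂(μH[2])
          ≤ ENNReal.ofReal C * ∫⁻ z in ball (0 : E3) 10, ENNReal.ofReal |v z| := by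
  set B := ball (0 : E3) 10
  set K : ℝ≥0∞ := 3 * ((2 * 20 : ℝ≥0) : ℝ≥0∞) ^ 2 * 3 ^ finrank ℝ E3 * volume B ^ 2
  have hK : K ≠ ⊤ := by finiteness
  have hB₀ : volume B ≠ 0 := (measure_ball_pos volume (0 : E3) (by norm_num : (0 : ℝ) < 10)).ne'
  have hK₀ : K ≠ 0 := by simp only [K]; positivity
  have hB : ∀ x ∈ B, ∀ y ∈ B, dist x y ≤ (20 : ℝ≥0) := fun x hx y hy => by
    have := dist_triangle_right x y 0
    rw [mem_ball] at hx hy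
    push_cast
    linarith
  refine ⟨K.toReal, ENNReal.toReal_pos hK₀ hK, ?_⟩
  intro c₂ l₂ _ _ hQ₂ c₃ l₃ _ _ hQ₃ v hv hv₀
  have hvB : ∫⁻ z in B, ENNReal.ofReal |v z| = ∫⁻ z, ENNReal.ofReal |v z| :=
    setLIntegral_eq_of_support_subset fun z hz => by_contra fun hzB => hz (by simp [hv₀ z hzB])
  have hvm : AEMeasurable v := (hv.integrable_of_forall_notMem_eq_zero hv₀).aemeasurable
  obtain ⟨g, hg, hvg, hvg_ae⟩ :=
    (show AEMeasurable (fun z => ENNReal.ofReal |v z|) by fun_prop).exists_measurable_ge_ae_eq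
  calc ∫⁻ x₁ in cube 0 1, ∫⁻ x₂ in cube c₂ l₂, ∫⁻ x₃ in cube c₃ l₃,
        ∫⁻ z in convexHull ℝ {x₁, x₂, x₃}, ENNReal.ofReal |v z| ∂(μH[2])
      ≤ ∫⁻ x₁ in B, ∫⁻ x₂ in B, ∫⁻ x₃ in B, ∫⁻ z in convexHull ℝ {x₁, x₂, x₃}, g z ∂(μH[2]) := by
        gcongr
        · exact cube_zero_one_subset_ball
        · exact hvg _
    _ ≤ K * ∫⁻ z, g z :=
        lintegral_lintegral_lintegral_convexHull_le volume hg measurableSet_ball hB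
    _ = ENNReal.ofReal K.toReal * ∫⁻ z in B, ENNReal.ofReal |v z| := by
        rw [ofReal_toReal hK, hvB, lintegral_congr_ae hvg_ae]
end
end

section
/- There exists a universal constant C > 0 such that for every x₁ ∈ ℝ³ and every nonnegative measurable function v on ℝ³: ∫_{B_{11}(x₁)} ∫_0^1 v((1−t)x₁ + t x₂) · |x₁ − x₂| dt dx₂ ≤ C ∫_{B_{11}(x₁)} v(z) · |z − x₁|^{−2} dz. -/
/-!
Center at `x` and pass to polar coordinates `y = x + r • ω`. On each ray the substitution
`s = t * r` turns the segment integral into `∫₀ʳ f (x + s • ω) ds ≤ ∫₀ᴿ f (x + s • ω) ds`,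
and the radial weight `r ^ (n - 1) ≤ R ^ (n - 1)` (`n = dim E`) integrated over `r ∈ (0, R)`
costs a factor `R ^ n`. On the right the same weight cancels `‖z - x‖ ^ (1 - n)`, leaving
exactly `∫₀ᴿ f (x + s • ω) ds`. In `ℝ³` this gives `C = 11 ^ 3`.
-/

open MeasureTheory Metric ENNReal

noncomputable section

local notation "E3" => EuclideanSpace ℝ (Fin 3)

open Set Module

theorem lintegral_Ioc_zero_eq_mul_lintegral_Ioc_zero_one {F : ℝ → ℝ≥0∞} (hF : Measurable F)
    {r : ℝ} (hr : 0 < r) :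
    ∫⁻ s in Ioc 0 r, F s = ENNReal.ofReal r * ∫⁻ t in Ioc 0 1, F (t * r) := by
  conv_lhs => rw [← Real.smul_map_volume_mul_right hr.ne']
  rw [setLIntegral_smul_measure, setLIntegral_map measurableSet_Ioc hF (measurable_mul_const r),
    preimage_mul_const_Ioc₀ _ _ hr, zero_div, div_self hr.ne', abs_of_pos hr, smul_eq_mul]

theorem lintegral_Ioo_pow_mul_lintegral_Ioc_le (k : ℕ) {F : ℝ → ℝ≥0∞} (hF : Measurable F)
    (R : ℝ) :
    ∫⁻ r in Ioo 0 R, ENNReal.ofReal (r ^ k) * ∫⁻ t in Ioc 0 1, F (t * r) * ENNReal.ofReal r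
      ≤ ENNReal.ofReal (R ^ (k + 1)) * ∫⁻ r in Ioo 0 R, F r := by
  rcases le_or_gt R 0 with hR | hR
  · simp [Ioo_eq_empty_of_le hR]
  set A := ∫⁻ r in Ioo 0 R, F r
  have hpointwise : ∀ r ∈ Ioo 0 R,
      ENNReal.ofReal (r ^ k) * ∫⁻ t in Ioc 0 1, F (t * r) * ENNReal.ofReal r
        ≤ ENNReal.ofReal (R ^ k) * A := by
    rintro r ⟨hr0, hrR⟩
    rw [lintegral_mul_const' _ _ ofReal_ne_top, mul_comm _ (ENNReal.ofReal r),
      ← lintegral_Ioc_zero_eq_mul_lintegral_Ioc_zero_one hF hr0]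
    exact mul_le_mul' (ENNReal.ofReal_le_ofReal (pow_le_pow_left₀ hr0.le hrR.le k))
      (lintegral_mono_set fun s hs => ⟨hs.1, hs.2.trans_lt hrR⟩)
  calc _ ≤ ∫⁻ _ in Ioo 0 R, ENNReal.ofReal (R ^ k) * A :=
        setLIntegral_mono' measurableSet_Ioo hpointwise
    _ = ENNReal.ofReal (R ^ (k + 1)) * A := by
      rw [setLIntegral_const, Real.volume_Ioo, sub_zero, mul_right_comm,
        ← ENNReal.ofReal_mul (pow_nonneg hR.le k), pow_succ]

namespace MeasureTheory

variable {E : Type*} [NormedAddCommGroup E] [NormedSpace ℝ E] [FiniteDimensional ℝ E]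
  [Nontrivial E] [MeasurableSpace E] [BorelSpace E] (μ : Measure E) [μ.IsAddHaarMeasure]

theorem lintegral_eq_lintegral_toSphere_lintegral_Ioi {g : E → ℝ≥0∞} (hg : Measurable g) :
    ∫⁻ y, g y ∂μ = ∫⁻ ω : sphere (0 : E) 1, (∫⁻ r in Ioi (0 : ℝ),
      ENNReal.ofReal (r ^ (finrank ℝ E - 1)) * g (r • (ω : E))) ∂μ.toSphere := by
  have hg' : Measurable fun p : sphere (0 : E) 1 × Ioi (0 : ℝ) => g (p.2.1 • (p.1 : E)) := by
    fun_prop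
  calc ∫⁻ y, g y ∂μ = ∫⁻ y : ({0}ᶜ : Set E), g y ∂μ.comap Subtype.val := by
        rw [lintegral_subtype_comap (measurableSet_singleton _).compl, restrict_compl_singleton]
    _ = ∫⁻ p, g (p.2.1 • (p.1 : E)) ∂μ.toSphere.prod (.volumeIoiPow (finrank ℝ E - 1)) := by
        rw [← (μ.measurePreserving_homeomorphUnitSphereProd).lintegral_comp hg']
        congr! with y
        exact congrArg Subtype.val ((homeomorphUnitSphereProd E).symm_apply_apply y).symm
    _ = _ := by
        rw [lintegral_prod _ hg'.aemeasurable]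
        refine lintegral_congr fun ω => ?_
        rw [Measure.volumeIoiPow,
          lintegral_withDensity_eq_lintegral_mul _ (by fun_prop) (by fun_prop),
          ← lintegral_subtype_comap measurableSet_Ioi]
        rfl

theorem lintegral_ball_eq_lintegral_toSphere_lintegral_Ioo (x : E) (R : ℝ) {g : E → ℝ≥0∞}
    (hg : Measurable g) :
    ∫⁻ y in ball x R, g y ∂μ = ∫⁻ ω : sphere (0 : E) 1, (∫⁻ r in Ioo 0 R,
      ENNReal.ofReal (r ^ (finrank ℝ E - 1)) * g (x + r • (ω : E))) ∂μ.toSphere := by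
  rw [← lintegral_indicator measurableSet_ball, ← lintegral_add_left_eq_self _ x,
    lintegral_eq_lintegral_toSphere_lintegral_Ioi μ (g := fun y => (ball x R).indicator g (x + y))
      ((hg.indicator measurableSet_ball).comp (measurable_const_add x))]
  refine lintegral_congr fun ω => ?_
  have hmem : ∀ r ∈ Ioi (0 : ℝ), x + r • (ω : E) ∈ ball x R ↔ r ∈ Iio R := fun r hr => by
    rw [mem_ball_iff_norm, add_sub_cancel_left, norm_smul, norm_eq_of_mem_sphere, mul_one,
      Real.norm_of_nonneg (le_of_lt hr), mem_Iio]
  rw [← Iio_inter_Ioi, ← Measure.restrict_restrict measurableSet_Iio,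
    ← lintegral_indicator measurableSet_Iio]
  refine setLIntegral_congr_fun measurableSet_Ioi fun r hr => ?_
  by_cases hrR : r ∈ Iio R
  · simp [indicator_of_mem hrR, indicator_of_mem ((hmem r hr).2 hrR)]
  · simp [indicator_of_notMem hrR, indicator_of_notMem (mt (hmem r hr).1 hrR)]

theorem lintegral_ball_lintegral_segment_le (x : E) (R : ℝ) {f : E → ℝ≥0∞} (hf : Measurable f) :
    ∫⁻ y in ball x R, (∫⁻ t in Ioc (0 : ℝ) 1, f (x + t • (y - x)) * ENNReal.ofReal ‖y - x‖) ∂μ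
      ≤ ENNReal.ofReal (R ^ finrank ℝ E) *
        ∫⁻ z in ball x R, f z * ENNReal.ofReal ((‖z - x‖ ^ (finrank ℝ E - 1))⁻¹) ∂μ := by
  have hn : finrank ℝ E - 1 + 1 = finrank ℝ E := Nat.sub_add_cancel finrank_pos
  rw [lintegral_ball_eq_lintegral_toSphere_lintegral_Ioo μ x R (by fun_prop),
    lintegral_ball_eq_lintegral_toSphere_lintegral_Ioo μ x R (by fun_prop),
    ← lintegral_const_mul' _ _ ofReal_ne_top]
  refine lintegral_mono fun ω => ?_
  have hnorm : ∀ r ∈ Ioo 0 R, ‖r • (ω : E)‖ = r := fun r hr => by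
    rw [norm_smul, norm_eq_of_mem_sphere, mul_one, Real.norm_of_nonneg hr.1.le]
  set F : ℝ → ℝ≥0∞ := fun s => f (x + s • (ω : E))
  calc _ = ∫⁻ r in Ioo 0 R, ENNReal.ofReal (r ^ (finrank ℝ E - 1)) *
        ∫⁻ t in Ioc 0 1, F (t * r) * ENNReal.ofReal r := by
        refine setLIntegral_congr_fun measurableSet_Ioo fun r hr => ?_
        simp only [add_sub_cancel_left, smul_smul, hnorm r hr, F]
    _ ≤ ENNReal.ofReal (R ^ (finrank ℝ E - 1 + 1)) * ∫⁻ r in Ioo 0 R, F r :=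
        lintegral_Ioo_pow_mul_lintegral_Ioc_le _ (by fun_prop) R
    _ = _ := by
        rw [hn]
        congr 1
        refine setLIntegral_congr_fun measurableSet_Ioo fun r hr => ?_
        rw [add_sub_cancel_left, hnorm r hr, mul_left_comm,
          ← ENNReal.ofReal_mul (pow_nonneg hr.1.le _), mul_inv_cancel₀ (pow_pos hr.1 _).ne',
          ENNReal.ofReal_one, mul_one]

end MeasureTheory

/-- **Polar-coordinates estimate.** For every `x₁` and every nonnegative measurable `v`,
`∫_{B₁₁(x₁)} ∫₀¹ v((1−t)x₁+t x₂)|x₁−x₂| dt dx₂ ≤ C ∫_{B₁₁(x₁)} v(z)|z−x₁|⁻² dz`. -/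
theorem segment_parametrization_bound :
    ∃ C : ℝ, 0 < C ∧
      ∀ (x₁ : E3) (v : E3 → ℝ), Measurable v → (∀ x, 0 ≤ v x) →
        ∫⁻ x₂ in ball x₁ 11, ∫⁻ t in Set.Ioc (0 : ℝ) 1,
            ENNReal.ofReal (v ((1 - t) • x₁ + t • x₂) * ‖x₁ - x₂‖)
          ≤ ENNReal.ofReal C *
              ∫⁻ z in ball x₁ 11, ENNReal.ofReal (v z * (‖z - x₁‖ ^ 2)⁻¹) := by
  refine ⟨11 ^ 3, by norm_num, fun x₁ v hv hv0 => ?_⟩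
  have hdim : finrank ℝ E3 = 3 := finrank_euclideanSpace_fin
  have hsegment : ∀ (x₂ : E3) (t : ℝ), (1 - t) • x₁ + t • x₂ = x₁ + t • (x₂ - x₁) := fun x₂ t => by
    rw [sub_smul, one_smul, smul_sub]; abel
  simp only [ENNReal.ofReal_mul (hv0 _), hsegment, norm_sub_rev x₁]
  simpa only [hdim] using
    lintegral_ball_lintegral_segment_le volume x₁ 11 hv.ennreal_ofReal
end
end
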